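/- arXiv:0911.2369 — 2 statements merged into one kernel-verified Lean document; each statement's English description precedes it below -/
import Mathlib

section
/- For any derivation D of the Poisson algebra Sym(Γ) of the Heisenberg Lie algebra Γ such that D(V) ⊆ V and D(z) = 0, there exists a unique element a_D ∈ z^{−1}·V·Sym(V) (inside the localization of Sym(Γ) at z) satisfying D(P) = {a_D, P} for every P ∈ Sym(Γ). -/
/-!
Since `D` preserves `V` and kills the central `z`, applying `D` to the relations
`{x_i, x_j} = {y_i, y_j} = 0` and `{x_i, y_j} = δ_ij z` shows that `D|_V` is infinitesimally
symplectic: `∂_{y_j} D x_i = ∂_{y_i} D x_j`, `∂_{x_j} D y_i = ∂_{x_i} D y_j` and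
`∂_{x_j} D x_i = -∂_{y_i} D y_j`. Together with Euler's identity for the linear forms `D x_i`,
`D y_i`, this makes `a = ½ Σ_i (x_i D y_i - y_i D x_i)` a Hamiltonian of `D` on `V`:
`∂_{x_j} a = D y_j` and `∂_{y_j} a = -D x_j`. Hence the derivations `D` and `z⁻¹ {a, ·}` agree on
the generators, so everywhere. For uniqueness, `{b, ·} = 0` kills every partial derivative of a
polynomial `b` in the `x, y`, so in characteristic zero `b` is its constant term.
-/

open MvPolynomial

/-- The linear Poisson bracket of `Sym Γ` for the Heisenberg Lie algebra `Γ`: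
`{P, Q} = z * Σ_i (∂P/∂x_i ∂Q/∂y_i - ∂P/∂y_i ∂Q/∂x_i)`. -/
noncomputable def heisBracket {K : Type} [Field K] {n : ℕ}
    (P Q : MvPolynomial ((Fin n ⊕ Fin n) ⊕ Unit) K) :
    MvPolynomial ((Fin n ⊕ Fin n) ⊕ Unit) K :=
  X (Sum.inr ()) *
    ∑ i : Fin n,
      (pderiv (Sum.inl (Sum.inl i)) P * pderiv (Sum.inl (Sum.inr i)) Q -
        pderiv (Sum.inl (Sum.inr i)) P * pderiv (Sum.inl (Sum.inl i)) Q)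

theorem inv_two_smul_add_self {K M : Type*} [Field K] [CharZero K] [AddCommGroup M] [Module K M]
    (p : M) : (2 : K)⁻¹ • (p + p) = p := by
  rw [← two_smul K p, smul_smul, inv_mul_cancel₀ two_ne_zero, one_smul]

namespace MvPolynomial

theorem sum_X_mul_pderiv_of_mem_span {R σ ι : Type*} [CommSemiring R] [Fintype ι] {f : ι → σ}
    (hf : Function.Injective f) {p : MvPolynomial σ R}
    (hp : p ∈ Submodule.span R (Set.range fun i => X (f i))) :
    ∑ i, X (f i) * pderiv (f i) p = p := by
  classical
  induction hp using Submodule.span_induction with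
  | mem _ h =>
    obtain ⟨j, rfl⟩ := h
    simp [pderiv_X, Pi.single_apply, hf.eq_iff]
  | zero => simp
  | add p q _ _ hp hq => simp only [map_add, mul_add, Finset.sum_add_distrib, hp, hq]
  | smul c p _ hp => simp only [Derivation.map_smul, mul_smul_comm, ← Finset.smul_sum, hp]

theorem eq_of_pderiv_eq {R σ : Type*} [CommRing R] [IsDomain R] [CharZero R]
    {p q : MvPolynomial σ R} (h : ∀ v, pderiv v p = pderiv v q)
    (h0 : constantCoeff p = constantCoeff q) : p = q := by
  ext m
  rcases eq_or_ne m 0 with rfl | hm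
  · simpa only [constantCoeff_eq] using h0
  obtain ⟨v, hv⟩ : ∃ v, m v ≠ 0 := by simpa [Finsupp.ext_iff] using hm
  have hm' : m - Finsupp.single v 1 + Finsupp.single v 1 = m :=
    tsub_add_cancel_of_le (Finsupp.single_le_iff.mpr (Nat.one_le_iff_ne_zero.mpr hv))
  have hcoeff := congrArg (coeff (m - Finsupp.single v 1)) (h v)
  rw [coeff_pderiv, coeff_pderiv, hm'] at hcoeff
  exact mul_right_cancel₀ (Nat.cast_add_one_ne_zero _) hcoeff

end MvPolynomial

namespace HeisenbergPoisson

variable {K : Type} [Field K] {n : ℕ}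

-- `X (inl (inl i))`, `X (inl (inr i))` and `X (inr ())` are `x_i`, `y_i` and `z`;
-- `𝓥` is `V` and `𝓐` is `Sym V = K[x, y]`.
local notation "𝓢" => MvPolynomial ((Fin n ⊕ Fin n) ⊕ Unit) K
local notation "𝓥" => Submodule.span K (Set.range fun w : Fin n ⊕ Fin n => (X (Sum.inl w) : 𝓢))
local notation "𝓐" => Algebra.adjoin K (Set.range fun w : Fin n ⊕ Fin n => (X (Sum.inl w) : 𝓢))

theorem heisBracket_comm (P Q : 𝓢) : heisBracket P Q = -heisBracket Q P := by
  rw [heisBracket, heisBracket, ← mul_neg, ← Finset.sum_neg_distrib]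
  congr 1
  exact Finset.sum_congr rfl fun i _ => by ring

theorem heisBracket_x_left (j : Fin n) (Q : 𝓢) :
    heisBracket (X (Sum.inl (Sum.inl j))) Q =
      X (Sum.inr ()) * pderiv (Sum.inl (Sum.inr j)) Q := by
  simp [heisBracket, pderiv_X, Pi.single_apply]

theorem heisBracket_y_left (j : Fin n) (Q : 𝓢) :
    heisBracket (X (Sum.inl (Sum.inr j))) Q =
      -(X (Sum.inr ()) * pderiv (Sum.inl (Sum.inl j)) Q) := by
  simp [heisBracket, pderiv_X, Pi.single_apply]

noncomputable def hamiltonian (a : 𝓢) : Derivation K 𝓢 𝓢 :=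
  ∑ i : Fin n, (pderiv (Sum.inl (Sum.inl i)) a • pderiv (Sum.inl (Sum.inr i)) -
    pderiv (Sum.inl (Sum.inr i)) a • pderiv (Sum.inl (Sum.inl i)))

theorem hamiltonian_apply (a P : 𝓢) :
    hamiltonian a P = ∑ i : Fin n,
      (pderiv (Sum.inl (Sum.inl i)) a * pderiv (Sum.inl (Sum.inr i)) P -
        pderiv (Sum.inl (Sum.inr i)) a * pderiv (Sum.inl (Sum.inl i)) P) := by
  rw [hamiltonian, ← Derivation.coeFnAddMonoidHom_apply, map_sum, Finset.sum_apply]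
  rfl

theorem heisBracket_eq_X_mul_hamiltonian (a P : 𝓢) :
    heisBracket a P = X (Sum.inr ()) * hamiltonian a P := by
  rw [heisBracket, hamiltonian_apply]

theorem hamiltonian_x (a : 𝓢) (j : Fin n) :
    hamiltonian a (X (Sum.inl (Sum.inl j))) = -pderiv (Sum.inl (Sum.inr j)) a := by
  simp [hamiltonian_apply, pderiv_X, Pi.single_apply]

theorem hamiltonian_y (a : 𝓢) (j : Fin n) :
    hamiltonian a (X (Sum.inl (Sum.inr j))) = pderiv (Sum.inl (Sum.inl j)) a := by
  simp [hamiltonian_apply, pderiv_X, Pi.single_apply]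

theorem hamiltonian_z (a : 𝓢) : hamiltonian a (X (Sum.inr ())) = 0 := by
  simp [hamiltonian_apply, pderiv_X]

theorem sum_X_mul_pderiv_of_mem_V {ℓ : 𝓢} (hℓ : ℓ ∈ 𝓥) :
    ∑ i, (X (Sum.inl (Sum.inl i)) * pderiv (Sum.inl (Sum.inl i)) ℓ +
      X (Sum.inl (Sum.inr i)) * pderiv (Sum.inl (Sum.inr i)) ℓ) = ℓ := by
  conv_rhs => rw [← sum_X_mul_pderiv_of_mem_span Sum.inl_injective hℓ]
  rw [Fintype.sum_sum_type, Finset.sum_add_distrib]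

theorem pderiv_y_map_x_comm {D : 𝓢 →ₗ[K] 𝓢}
    (hDbr : ∀ a b, D (heisBracket a b) = heisBracket (D a) b + heisBracket a (D b))
    (i j : Fin n) :
    (pderiv (Sum.inl (Sum.inr j)) (D (X (Sum.inl (Sum.inl i)))) : 𝓢) =
      pderiv (Sum.inl (Sum.inr i)) (D (X (Sum.inl (Sum.inl j)))) := by
  have h := hDbr (X (Sum.inl (Sum.inl i))) (X (Sum.inl (Sum.inl j)))
  rw [heisBracket_comm (D _), heisBracket_x_left, heisBracket_x_left, heisBracket_x_left,
    pderiv_X_of_ne (by simp), mul_zero, map_zero] at h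
  exact mul_left_cancel₀ (X_ne_zero _) (by linear_combination h)

theorem pderiv_x_map_y_comm {D : 𝓢 →ₗ[K] 𝓢}
    (hDbr : ∀ a b, D (heisBracket a b) = heisBracket (D a) b + heisBracket a (D b))
    (i j : Fin n) :
    (pderiv (Sum.inl (Sum.inl j)) (D (X (Sum.inl (Sum.inr i)))) : 𝓢) =
      pderiv (Sum.inl (Sum.inl i)) (D (X (Sum.inl (Sum.inr j)))) := by
  have h := hDbr (X (Sum.inl (Sum.inr i))) (X (Sum.inl (Sum.inr j)))
  rw [heisBracket_comm (D _), heisBracket_y_left, heisBracket_y_left, heisBracket_y_left,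
    pderiv_X_of_ne (by simp), mul_zero, neg_zero, map_zero] at h
  exact mul_left_cancel₀ (X_ne_zero _) (by linear_combination -h)

theorem pderiv_x_map_x {D : 𝓢 →ₗ[K] 𝓢}
    (hDbr : ∀ a b, D (heisBracket a b) = heisBracket (D a) b + heisBracket a (D b))
    (hDz : D (X (Sum.inr ())) = 0) (i j : Fin n) :
    (pderiv (Sum.inl (Sum.inl j)) (D (X (Sum.inl (Sum.inl i)))) : 𝓢) =
      -pderiv (Sum.inl (Sum.inr i)) (D (X (Sum.inl (Sum.inr j)))) := by
  have h := hDbr (X (Sum.inl (Sum.inl i))) (X (Sum.inl (Sum.inr j)))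
  have hz : D (heisBracket (X (Sum.inl (Sum.inl i))) (X (Sum.inl (Sum.inr j)))) = 0 := by
    rw [heisBracket_x_left, pderiv_X]
    rcases eq_or_ne i j with rfl | hij
    · simp [hDz]
    · simp [hij]
  rw [hz, heisBracket_comm (D _), heisBracket_y_left, heisBracket_x_left] at h
  exact mul_left_cancel₀ (X_ne_zero _) (by linear_combination -h)

/-- `½ ω(v, A v)` in the coordinates `x, y`, where `ω` is the symplectic form of `V` and `A = D|_V`. -/
noncomputable def quadraticHamiltonian (D : 𝓢 →ₗ[K] 𝓢) : 𝓢 :=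
  (2 : K)⁻¹ • ∑ i : Fin n, (X (Sum.inl (Sum.inl i)) * D (X (Sum.inl (Sum.inr i))) -
    X (Sum.inl (Sum.inr i)) * D (X (Sum.inl (Sum.inl i))))

theorem pderiv_x_quadraticHamiltonian [CharZero K] {D : 𝓢 →ₗ[K] 𝓢}
    (hDbr : ∀ a b, D (heisBracket a b) = heisBracket (D a) b + heisBracket a (D b))
    (hDz : D (X (Sum.inr ())) = 0) (hDV : ∀ v ∈ 𝓥, D v ∈ 𝓥) (j : Fin n) :
    pderiv (Sum.inl (Sum.inl j)) (quadraticHamiltonian D) = D (X (Sum.inl (Sum.inr j))) := by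
  have hDy : D (X (Sum.inl (Sum.inr j))) ∈ 𝓥 := hDV _ (Submodule.subset_span ⟨_, rfl⟩)
  rw [quadraticHamiltonian, Derivation.map_smul, ← inv_two_smul_add_self (K := K) (D _)]
  congr 1
  calc pderiv (Sum.inl (Sum.inl j)) (∑ i : Fin n, (X (Sum.inl (Sum.inl i)) *
          D (X (Sum.inl (Sum.inr i))) - X (Sum.inl (Sum.inr i)) * D (X (Sum.inl (Sum.inl i)))))
      = D (X (Sum.inl (Sum.inr j))) + ∑ i : Fin n,
          (X (Sum.inl (Sum.inl i)) * pderiv (Sum.inl (Sum.inl j)) (D (X (Sum.inl (Sum.inr i)))) -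
            X (Sum.inl (Sum.inr i)) *
              pderiv (Sum.inl (Sum.inl j)) (D (X (Sum.inl (Sum.inl i))))) := by
        simp only [Finset.sum_sub_distrib, map_sub, map_sum, Derivation.leibniz, smul_eq_mul,
          pderiv_X, Pi.single_apply, Sum.inl.injEq, mul_ite, mul_one, mul_zero,
          Finset.sum_add_distrib, Finset.sum_ite_eq', Finset.mem_univ, ↓reduceIte,
          reduceCtorEq, add_zero]
        ring
    _ = D (X (Sum.inl (Sum.inr j))) + ∑ i : Fin n,
          (X (Sum.inl (Sum.inl i)) * pderiv (Sum.inl (Sum.inl i)) (D (X (Sum.inl (Sum.inr j)))) +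
            X (Sum.inl (Sum.inr i)) *
              pderiv (Sum.inl (Sum.inr i)) (D (X (Sum.inl (Sum.inr j))))) := by
        refine congrArg _ (Finset.sum_congr rfl fun i _ => ?_)
        rw [pderiv_x_map_y_comm hDbr, pderiv_x_map_x hDbr hDz]
        ring
    _ = _ := by rw [sum_X_mul_pderiv_of_mem_V hDy]

theorem pderiv_y_quadraticHamiltonian [CharZero K] {D : 𝓢 →ₗ[K] 𝓢}
    (hDbr : ∀ a b, D (heisBracket a b) = heisBracket (D a) b + heisBracket a (D b))
    (hDz : D (X (Sum.inr ())) = 0) (hDV : ∀ v ∈ 𝓥, D v ∈ 𝓥) (j : Fin n) :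
    pderiv (Sum.inl (Sum.inr j)) (quadraticHamiltonian D) = -D (X (Sum.inl (Sum.inl j))) := by
  have hDx : D (X (Sum.inl (Sum.inl j))) ∈ 𝓥 := hDV _ (Submodule.subset_span ⟨_, rfl⟩)
  rw [quadraticHamiltonian, Derivation.map_smul, ← inv_two_smul_add_self (K := K) (-D _)]
  congr 1
  calc pderiv (Sum.inl (Sum.inr j)) (∑ i : Fin n, (X (Sum.inl (Sum.inl i)) *
          D (X (Sum.inl (Sum.inr i))) - X (Sum.inl (Sum.inr i)) * D (X (Sum.inl (Sum.inl i)))))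
      = -D (X (Sum.inl (Sum.inl j))) + ∑ i : Fin n,
          (X (Sum.inl (Sum.inl i)) * pderiv (Sum.inl (Sum.inr j)) (D (X (Sum.inl (Sum.inr i)))) -
            X (Sum.inl (Sum.inr i)) *
              pderiv (Sum.inl (Sum.inr j)) (D (X (Sum.inl (Sum.inl i))))) := by
        simp only [Finset.sum_sub_distrib, map_sub, map_sum, Derivation.leibniz, smul_eq_mul,
          pderiv_X, ne_eq, Sum.inl.injEq, reduceCtorEq, not_false_eq_true, Pi.single_eq_of_ne,
          mul_zero, add_zero, Pi.single_apply, Sum.inr.injEq, mul_ite, mul_one,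
          Finset.sum_add_distrib, Finset.sum_ite_eq', Finset.mem_univ, ↓reduceIte]
        ring
    _ = -D (X (Sum.inl (Sum.inl j))) + ∑ i : Fin n,
          -(X (Sum.inl (Sum.inl i)) * pderiv (Sum.inl (Sum.inl i)) (D (X (Sum.inl (Sum.inl j)))) +
            X (Sum.inl (Sum.inr i)) *
              pderiv (Sum.inl (Sum.inr i)) (D (X (Sum.inl (Sum.inl j))))) := by
        refine congrArg _ (Finset.sum_congr rfl fun i _ => ?_)
        rw [pderiv_y_map_x_comm hDbr i j]
        linear_combination X (Sum.inl (Sum.inl i)) * pderiv_x_map_x hDbr hDz j i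
    _ = _ := by rw [Finset.sum_neg_distrib, sum_X_mul_pderiv_of_mem_V hDx]

theorem hamiltonian_quadraticHamiltonian_apply [CharZero K] {D : 𝓢 →ₗ[K] 𝓢}
    (hDmul : ∀ a b, D (a * b) = D a * b + a * D b)
    (hDbr : ∀ a b, D (heisBracket a b) = heisBracket (D a) b + heisBracket a (D b))
    (hDz : D (X (Sum.inr ())) = 0) (hDV : ∀ v ∈ 𝓥, D v ∈ 𝓥) (P : 𝓢) :
    hamiltonian (quadraticHamiltonian D) P = D P := by
  let Dd : Derivation K 𝓢 𝓢 := Derivation.mk' D fun a b => by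
    rw [hDmul, smul_eq_mul, smul_eq_mul, add_comm, mul_comm (D a)]
  have hDd : hamiltonian (quadraticHamiltonian D) = Dd := by
    refine derivation_ext fun v => ?_
    rcases v with (j | j) | ⟨⟩
    · rw [hamiltonian_x, pderiv_y_quadraticHamiltonian hDbr hDz hDV, neg_neg]
      rfl
    · rw [hamiltonian_y, pderiv_x_quadraticHamiltonian hDbr hDz hDV]
      rfl
    · rw [hamiltonian_z]
      exact hDz.symm
  exact DFunLike.congr_fun hDd P

theorem quadraticHamiltonian_mem_adjoin {D : 𝓢 →ₗ[K] 𝓢} (hDV : ∀ v ∈ 𝓥, D v ∈ 𝓥) :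
    quadraticHamiltonian D ∈ 𝓐 := by
  have hV : ∀ v ∈ 𝓥, v ∈ 𝓐 := fun v hv => Algebra.span_le_adjoin K _ hv
  have hX : ∀ w, (X (Sum.inl w) : 𝓢) ∈ 𝓥 := fun w => Submodule.subset_span ⟨w, rfl⟩
  exact Subalgebra.smul_mem _ (Subalgebra.sum_mem _ fun i _ =>
    sub_mem (mul_mem (hV _ (hX _)) (hV _ (hDV _ (hX _))))
      (mul_mem (hV _ (hX _)) (hV _ (hDV _ (hX _))))) _

theorem constantCoeff_quadraticHamiltonian (D : 𝓢 →ₗ[K] 𝓢) :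
    constantCoeff (quadraticHamiltonian D) = 0 := by
  simp [quadraticHamiltonian]

theorem pderiv_z_eq_zero_of_mem_adjoin {a : 𝓢} (ha : a ∈ 𝓐) :
    pderiv (Sum.inr ()) a = 0 := by
  have hsupp : 𝓐 = supported K (Set.range Sum.inl) := by
    rw [supported_eq_adjoin_X, ← Set.range_comp]
    rfl
  rw [hsupp] at ha
  exact pderiv_eq_zero_of_notMem_vars fun h => by simpa using mem_supported.mp ha h

theorem eq_of_hamiltonian_eq [CharZero K] {a b : 𝓢} (h : ∀ P, hamiltonian a P = hamiltonian b P)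
    (ha : a ∈ 𝓐) (hb : b ∈ 𝓐) (h0 : constantCoeff a = constantCoeff b) : a = b := by
  refine eq_of_pderiv_eq (fun v => ?_) h0
  rcases v with (j | j) | ⟨⟩
  · simpa only [hamiltonian_y] using h (X (Sum.inl (Sum.inr j)))
  · simpa only [hamiltonian_x, neg_inj] using h (X (Sum.inl (Sum.inl j)))
  · rw [pderiv_z_eq_zero_of_mem_adjoin ha, pderiv_z_eq_zero_of_mem_adjoin hb]

end HeisenbergPoisson

open HeisenbergPoisson

theorem lemma_2_4
    (K : Type) [Field K] [CharZero K] (n : ℕ)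
    (D : MvPolynomial ((Fin n ⊕ Fin n) ⊕ Unit) K →ₗ[K]
      MvPolynomial ((Fin n ⊕ Fin n) ⊕ Unit) K)
    (hDmul : ∀ a b, D (a * b) = D a * b + a * D b)
    (hDbr : ∀ a b, D (heisBracket a b) = heisBracket (D a) b + heisBracket a (D b))
    (hDV : ∀ v ∈ Submodule.span K (Set.range fun w : Fin n ⊕ Fin n =>
        (X (Sum.inl w) : MvPolynomial ((Fin n ⊕ Fin n) ⊕ Unit) K)),
      D v ∈ Submodule.span K (Set.range fun w : Fin n ⊕ Fin n =>
        (X (Sum.inl w) : MvPolynomial ((Fin n ⊕ Fin n) ⊕ Unit) K)))    -- D (V) ⊆ V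
    (hDz : D (X (Sum.inr ())) = 0) :                                   -- D (z) = 0
    ∃! a : MvPolynomial ((Fin n ⊕ Fin n) ⊕ Unit) K,
      (a ∈ Algebra.adjoin K (Set.range fun w : Fin n ⊕ Fin n =>
          (X (Sum.inl w) : MvPolynomial ((Fin n ⊕ Fin n) ⊕ Unit) K)) ∧
        constantCoeff a = 0) ∧                                 -- a ∈ V • Sym V
      ∀ P, (X (Sum.inr ()) : MvPolynomial ((Fin n ⊕ Fin n) ⊕ Unit) K) * D P =
        heisBracket a P                                        -- D P = {z⁻¹ a, P}
    := by
  have hD := hamiltonian_quadraticHamiltonian_apply hDmul hDbr hDz hDV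
  refine ⟨quadraticHamiltonian D, ⟨⟨quadraticHamiltonian_mem_adjoin hDV,
    constantCoeff_quadraticHamiltonian D⟩, fun P => ?_⟩, ?_⟩
  · rw [heisBracket_eq_X_mul_hamiltonian, hD]
  · rintro b ⟨⟨hb, hb0⟩, hbD⟩
    refine eq_of_hamiltonian_eq (fun P => ?_) hb (quadraticHamiltonian_mem_adjoin hDV)
      (by rw [hb0, constantCoeff_quadraticHamiltonian])
    refine mul_left_cancel₀ (X_ne_zero (Sum.inr ())) ?_
    rw [← heisBracket_eq_X_mul_hamiltonian, ← hbD, hD]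
end

section
/- Each Q_i (i = 1,…,m) is a polynomial function on 𝔫* invariant under the coadjoint representation of N, i.e. Q_1,…,Q_m ∈ 𝒜^N. -/
/-!
Each `Z j` is `N`-invariant, hence so is every monomial in them. For membership in `𝒜`, either
`Q i = P i`, or `Q i ^ 2 = P i ∈ 𝒜`; in the latter case `Q i` is integral over `𝒜`, so lies in `𝒜`
since `𝒜` is integrally closed in its fraction field `ℱ`.
-/

theorem Subalgebra.isFractionRing_of_forall_eq_div {R F : Type*} [CommRing R] [Field F]
    [Algebra R F] (A : Subalgebra R F) (h : ∀ x : F, ∃ a ∈ A, ∃ b ∈ A, x = a / b) :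
    IsFractionRing A F :=
  IsFractionRing.of_field A F fun x ↦
    let ⟨a, ha, b, hb, hx⟩ := h x
    ⟨⟨a, ha⟩, ⟨b, hb⟩, hx⟩

theorem Finset.prod_zpow_two_mul {ι α : Type*} [DivisionCommMonoid α] (s : Finset ι)
    (a : ι → α) (e : ι → ℤ) : ∏ j ∈ s, a j ^ (2 * e j) = (∏ j ∈ s, a j ^ e j) ^ 2 := by
  rw [← Finset.prod_pow]
  refine Finset.prod_congr rfl fun j _ ↦ ?_
  rw [zpow_mul', zpow_ofNat]

theorem lemma_2_11_general
    (K F : Type) [Field K] [Field F] [Algebra K F]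
    (N : Type) [Group N] (act : N →* (F ≃ₐ[K] F))
    (A : Subalgebra K F)                                  -- 𝒜 = K[𝔫*] inside ℱ = K(𝔫*)
    (hA : ∀ x : F, ∃ a ∈ A, ∃ b ∈ A, b ≠ 0 ∧ x = a / b)   -- ℱ is the fraction field of 𝒜
    (hAic : IsIntegrallyClosed A)                         -- 𝒜 is integrally closed
    (m : ℕ) (Z : Fin m → F)
    (hZinv : ∀ (g : N) (j : Fin m), act g (Z j) = Z j)    -- Z j ∈ ℱ^N (Proposition 2.6)
    (k k' : Fin m → Fin m → ℤ)
    (P : Fin m → F)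
    (hPA : ∀ i, P i ∈ A)                                  -- P i ∈ 𝒜
    (hP : ∀ i, P i = ∏ j, Z j ^ k i j)                    -- P i = Z₁^{k i 1} ⋯ Z_m^{k i m}
    (hgcd : ∀ i, (∀ j, k' i j = k i j) ∨ (∀ j, k i j = 2 * k' i j)) :
    ∀ i : Fin m,
      (∏ j, Z j ^ k' i j) ∈ A ∧
      ∀ g : N, act g (∏ j, Z j ^ k' i j) = ∏ j, Z j ^ k' i j := by
  have : IsFractionRing A F := A.isFractionRing_of_forall_eq_div fun x ↦
    let ⟨a, ha, b, hb, _, hx⟩ := hA x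
    ⟨a, ha, b, hb, hx⟩
  intro i
  refine ⟨?_, fun g ↦ by simp only [map_prod, map_zpow₀, hZinv]⟩
  rcases hgcd i with hk | hk
  · have hQ : ∏ j, Z j ^ k' i j = P i := by simp only [hP, hk]
    exact hQ ▸ hPA i
  · have hQsq : (∏ j, Z j ^ k' i j) ^ 2 ∈ A := by
      simpa only [hP, hk, Finset.prod_zpow_two_mul] using hPA i
    obtain ⟨q, hq⟩ := IsIntegrallyClosed.exists_algebraMap_eq_of_pow_mem_subalgebra two_pos hQsq
    exact hq ▸ q.2

theorem lemma_2_11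
    (K F : Type) [Field K] [CharZero K] [Field F] [Algebra K F]
    (N : Type) [Group N] (act : N →* (F ≃ₐ[K] F))
    (A : Subalgebra K F)                                  -- 𝒜 = K[𝔫*] inside ℱ = K(𝔫*)
    (hA : ∀ x : F, ∃ a ∈ A, ∃ b ∈ A, b ≠ 0 ∧ x = a / b)   -- ℱ is the fraction field of 𝒜
    (hAact : ∀ (g : N), ∀ a ∈ A, act g a ∈ A)             -- 𝒜 is stable under the action of N
    (hAic : IsIntegrallyClosed A)                         -- 𝒜 is integrally closed
    (m : ℕ) (Z : Fin m → F)
    (hZne : ∀ j, Z j ≠ 0)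
    (hZinv : ∀ (g : N) (j : Fin m), act g (Z j) = Z j)    -- Z j ∈ ℱ^N (Proposition 2.6)
    (k k' : Fin m → Fin m → ℤ)
    (P : Fin m → F)
    (hPA : ∀ i, P i ∈ A)                                  -- P i ∈ 𝒜
    (hPinv : ∀ (g : N) (i : Fin m), act g (P i) = P i)    -- P i ∈ 𝒜^N
    (hP : ∀ i, P i = ∏ j, Z j ^ k i j)                    -- P i = Z₁^{k i 1} ⋯ Z_m^{k i m}
    (hgcd : ∀ i, (∀ j, k' i j = k i j) ∨ (∀ j, k i j = 2 * k' i j)) :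
    ∀ i : Fin m,
      (∏ j, Z j ^ k' i j) ∈ A ∧
      ∀ g : N, act g (∏ j, Z j ^ k' i j) = ∏ j, Z j ^ k' i j :=
  lemma_2_11_general K F N act A hA hAic m Z hZinv k k' P hPA hP hgcd
end
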